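/- In DDPM, the posterior q(x_{n-1} | x_n, x_0) is Gaussian with mean μ̃_n = (√(ᾱ_{n-1}) β_n x_0 + √α_n (1 − ᾱ_{n-1}) x_n) / (1 − ᾱ_n) and variance β̃_n = (1 − ᾱ_{n-1}) β_n / (1 − ᾱ_n). -/

import Mathlib

open Real

/-- One-dimensional Gaussian density with mean `m` and variance `v`. -/
noncomputable def normPdf (m v x : ℝ) : ℝ :=
  (Real.sqrt (2 * π * v))⁻¹ * Real.exp (-(x - m)^2 / (2 * v))

/-- the DDPM posterior `q(x_{n−1} | x_n, x_0)` is Gaussian with mean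
`μ̃_n = (√ᾱ_{n−1} β_n x_0 + √α_n (1 − ᾱ_{n−1}) x_n) / (1 − ᾱ_n)` and variance
`β̃_n = (1 − ᾱ_{n−1}) β_n / (1 − ᾱ_n)`, as follows from Bayes' rule
`q(x_n|x_{n−1}) q(x_{n−1}|x_0) = q(x_n|x_0) q(x_{n−1}|x_n,x_0)` by completing the square
(one-dimensional case). Here `αn = 1 − βn`, `abar = αn * abarPrev` play the roles of
`α_n, ᾱ_n, ᾱ_{n−1}`. -/
theorem ddpm_posterior
    (βn αn abarPrev abar : ℝ)
    (hβ : 0 < βn ∧ βn < 1) (hα : αn = 1 - βn)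
    (habarPrev : 0 < abarPrev ∧ abarPrev < 1) (habar : abar = αn * abarPrev)
    (x0 xn xprev : ℝ) :
    normPdf (Real.sqrt αn * xprev) βn xn *
        normPdf (Real.sqrt abarPrev * x0) (1 - abarPrev) xprev =
      normPdf (Real.sqrt abar * x0) (1 - abar) xn *
        normPdf
          ((Real.sqrt abarPrev * βn * x0 + Real.sqrt αn * (1 - abarPrev) * xn) / (1 - abar))
          ((1 - abarPrev) * βn / (1 - abar)) xprev := by
  obtain ⟨hβ0, hβ1⟩ := hβ
  obtain ⟨hp0, hp1⟩ := habarPrev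
  have hα0 : 0 < αn := by rw [hα]; linarith
  have hα1 : αn < 1 := by rw [hα]; linarith
  have habar0 : 0 < abar := by rw [habar]; positivity
  have habar1 : abar < 1 := by
    rw [habar]; nlinarith
  set a := Real.sqrt αn with ha
  set b := Real.sqrt abarPrev with hb
  have ha2 : a ^ 2 = αn := Real.sq_sqrt hα0.le
  have hb2 : b ^ 2 = abarPrev := Real.sq_sqrt hp0.le
  have hab : Real.sqrt abar = a * b := by
    rw [habar, Real.sqrt_mul hα0.le]
  have hβe : βn = 1 - a ^ 2 := by rw [ha2]; linarith [hα]
  have h1a : (0:ℝ) < 1 - a ^ 2 := by rw [ha2]; linarith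
  have h1b : (0:ℝ) < 1 - b ^ 2 := by rw [hb2]; linarith
  have h1ab : (0:ℝ) < 1 - a ^ 2 * b ^ 2 := by rw [ha2, hb2, ← habar]; linarith
  unfold normPdf
  rw [hab, hβe]
  have habar' : abar = a ^ 2 * b ^ 2 := by rw [habar, ← ha2, ← hb2]
  have habp : abarPrev = b ^ 2 := hb2.symm
  rw [habar', habp]
  have hπ : (0:ℝ) < π := Real.pi_pos
  -- normalization constants
  have hpre : (Real.sqrt (2 * π * (1 - a ^ 2)))⁻¹ * (Real.sqrt (2 * π * (1 - b ^ 2)))⁻¹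
      = (Real.sqrt (2 * π * (1 - a ^ 2 * b ^ 2)))⁻¹ *
        (Real.sqrt (2 * π * ((1 - b ^ 2) * (1 - a ^ 2) / (1 - a ^ 2 * b ^ 2))))⁻¹ := by
    rw [← mul_inv, ← mul_inv, ← Real.sqrt_mul (by positivity), ← Real.sqrt_mul (by positivity)]
    congr 1
    field_simp
  -- exponents
  have hexp : Real.exp (-(xn - a * xprev) ^ 2 / (2 * (1 - a ^ 2))) *
      Real.exp (-(xprev - b * x0) ^ 2 / (2 * (1 - b ^ 2)))
      = Real.exp (-(xn - a * b * x0) ^ 2 / (2 * (1 - a ^ 2 * b ^ 2))) *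
        Real.exp (-(xprev - (b * (1 - a ^ 2) * x0 + a * (1 - b ^ 2) * xn) /
            (1 - a ^ 2 * b ^ 2)) ^ 2 /
          (2 * ((1 - b ^ 2) * (1 - a ^ 2) / (1 - a ^ 2 * b ^ 2)))) := by
    rw [← Real.exp_add, ← Real.exp_add]
    congr 1
    field_simp
    ring
  calc (Real.sqrt (2 * π * (1 - a ^ 2)))⁻¹ * Real.exp (-(xn - a * xprev) ^ 2 / (2 * (1 - a ^ 2))) *
        ((Real.sqrt (2 * π * (1 - b ^ 2)))⁻¹ *
          Real.exp (-(xprev - b * x0) ^ 2 / (2 * (1 - b ^ 2))))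
      = ((Real.sqrt (2 * π * (1 - a ^ 2)))⁻¹ * (Real.sqrt (2 * π * (1 - b ^ 2)))⁻¹) *
        (Real.exp (-(xn - a * xprev) ^ 2 / (2 * (1 - a ^ 2))) *
          Real.exp (-(xprev - b * x0) ^ 2 / (2 * (1 - b ^ 2)))) := by ring
    _ = _ := by
        rw [hpre, hexp]; ring
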